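/- Let x : [0,T] → ℝ satisfy x(t) = ∫₀ᵗ F(τ) y(τ) dτ + C with C > 0, F, y non-negative and y(τ) ≤ √(x(τ)) for a.e. τ. Then √(x(t)) ≤ √C + (1/2)∫₀ᵗ F(τ) dτ for all t ∈ [0,T]. -/

import Mathlib

/-!
The function `x = C + ∫ F y` is absolutely continuous and stays above `C > 0`, where `√` is
Lipschitz; hence `√x` is absolutely continuous, and a.e. `(√x)' = F y / (2 √x) ≤ F / 2` because
`y ≤ √x`. Integrating this derivative bound (fundamental theorem of calculus for absolutely
continuous functions) gives the claim.
-/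

open MeasureTheory Set Filter

theorem Real.lipschitzOnWith_sqrt_Ici {c : ℝ} (hc : 0 < c) :
    LipschitzOnWith (2 * √c)⁻¹.toNNReal Real.sqrt (Ici c) := by
  refine LipschitzOnWith.of_dist_le_mul fun v hv w hw => ?_
  have hv' : √c ≤ √v := Real.sqrt_le_sqrt hv
  have hw' : √c ≤ √w := Real.sqrt_le_sqrt hw
  have hsc : 0 < √c := Real.sqrt_pos.2 hc
  have hdiff : (√v + √w) * (√v - √w) = v - w := by
    rw [← sq_sub_sq, Real.sq_sqrt (hc.le.trans hv), Real.sq_sqrt (hc.le.trans hw)]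
  rw [Real.coe_toNNReal _ (by positivity), Real.dist_eq, Real.dist_eq, ← hdiff, abs_mul,
    abs_of_pos (by linarith : 0 < √v + √w), mul_comm (√v + √w)]
  calc |√v - √w| = (2 * √c)⁻¹ * (|√v - √w| * (2 * √c)) := by field_simp
    _ ≤ (2 * √c)⁻¹ * (|√v - √w| * (√v + √w)) := by gcongr; linarith

theorem LipschitzOnWith.comp_absolutelyContinuousOnInterval {X Y : Type*} [PseudoMetricSpace X]
    [PseudoMetricSpace Y] {g : X → Y} {K : NNReal} {s : Set X} {f : ℝ → X} {a b : ℝ}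
    (hg : LipschitzOnWith K g s) (hf : AbsolutelyContinuousOnInterval f a b)
    (hfs : MapsTo f (uIcc a b) s) : AbsolutelyContinuousOnInterval (g ∘ f) a b := by
  unfold AbsolutelyContinuousOnInterval at hf ⊢
  have hKf := hf.const_mul (K : ℝ)
  rw [mul_zero] at hKf
  refine squeeze_zero' (Eventually.of_forall fun E => Finset.sum_nonneg fun i _ => dist_nonneg)
    ?_ hKf
  filter_upwards [mem_inf_of_right (mem_principal_self _)] with E hE
  rw [Finset.mul_sum]
  exact Finset.sum_le_sum fun i hi =>
    hg.dist_le_mul _ (hfs (hE.1 i hi).1) _ (hfs (hE.1 i hi).2)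

theorem AbsolutelyContinuousOnInterval.sub_le_integral_of_deriv_le {u φ : ℝ → ℝ} {a b : ℝ}
    (hab : a ≤ b) (hu : AbsolutelyContinuousOnInterval u a b)
    (hφ : IntervalIntegrable φ volume a b)
    (hle : ∀ᵐ τ ∂volume.restrict (Ioc a b), deriv u τ ≤ φ τ) :
    u b - u a ≤ ∫ τ in a..b, φ τ := by
  rw [← hu.integral_deriv_eq_sub, intervalIntegral.integral_of_le hab,
    intervalIntegral.integral_of_le hab]
  exact setIntegral_mono_ae_restrict (hu.intervalIntegrable_deriv.1) hφ.1 hle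

theorem sqrt_add_integral_mul_le {F y : ℝ → ℝ} {C a b : ℝ} (hab : a ≤ b) (hC : 0 < C)
    (hF : IntervalIntegrable F volume a b)
    (hFy : IntervalIntegrable (fun τ => F τ * y τ) volume a b)
    (hF0 : ∀ τ, 0 ≤ F τ) (hy0 : ∀ τ, 0 ≤ y τ)
    (hyx : ∀ᵐ τ ∂volume.restrict (Ioc a b), y τ ≤ √(C + ∫ σ in a..τ, F σ * y σ)) :
    √(C + ∫ τ in a..b, F τ * y τ) ≤ √C + (1 / 2) * ∫ τ in a..b, F τ := by
  set G : ℝ → ℝ := fun s => ∫ σ in a..s, F σ * y σ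
  have hG0 : ∀ s ∈ uIcc a b, 0 ≤ G s := fun s hs =>
    intervalIntegral.integral_nonneg (uIcc_of_le hab ▸ hs).1 fun τ _ => mul_nonneg (hF0 τ) (hy0 τ)
  have hX : AbsolutelyContinuousOnInterval (fun s => C + G s) a b :=
    (LipschitzWith.const C).lipschitzOnWith.absolutelyContinuousOnInterval.fun_add
      (hFy.absolutelyContinuousOnInterval_intervalIntegral left_mem_uIcc)
  have hu : AbsolutelyContinuousOnInterval (fun s => √(C + G s)) a b :=
    (Real.lipschitzOnWith_sqrt_Ici hC).comp_absolutelyContinuousOnInterval hX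
      fun s hs => le_add_of_nonneg_right (hG0 s hs)
  have hderiv : ∀ᵐ τ ∂volume.restrict (Ioc a b), deriv (fun s => √(C + G s)) τ ≤ F τ / 2 := by
    filter_upwards [hyx, ae_restrict_mem measurableSet_Ioc,
      ae_restrict_of_ae hFy.ae_hasDerivAt_integral] with τ hyτ hτ hGτ
    have hτ' : τ ∈ uIcc a b := uIcc_of_le hab ▸ Ioc_subset_Icc_self hτ
    have hXτ : 0 < C + G τ := by linarith [hG0 τ hτ']
    rw [(((hGτ hτ' a left_mem_uIcc).const_add C).sqrt hXτ.ne').deriv,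
      div_le_div_iff₀ (by positivity) two_pos]
    calc F τ * y τ * 2 ≤ F τ * √(C + G τ) * 2 := by gcongr; exact hF0 τ
      _ = F τ * (2 * √(C + G τ)) := by ring
  have key := hu.sub_le_integral_of_deriv_le hab (hF.div_const 2) hderiv
  simp only [G, intervalIntegral.integral_same, add_zero, intervalIntegral.integral_div] at key
  linarith

theorem stmt1_general (T C : ℝ) (hC : 0 < C) (F y x : ℝ → ℝ)
    (hF : IntegrableOn F (Set.Ioc 0 T))
    (hFpos : ∀ t, 0 ≤ F t) (hypos : ∀ t, 0 ≤ y t)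
    (hx : ∀ t ∈ Set.Icc (0:ℝ) T, x t = (∫ τ in Set.Ioc 0 t, F τ * y τ) + C)
    (hyx : ∀ᵐ τ ∂(volume.restrict (Set.Ioc (0:ℝ) T)), y τ ≤ Real.sqrt (x τ)) :
    ∀ t ∈ Set.Icc (0:ℝ) T,
      Real.sqrt (x t) ≤ Real.sqrt C + (1 / 2) * ∫ τ in Set.Ioc 0 t, F τ := by
  rintro t ⟨ht0, htT⟩
  have hx' : ∀ s ∈ Icc 0 t, x s = C + ∫ τ in 0..s, F τ * y τ := fun s hs => by
    rw [hx s ⟨hs.1, hs.2.trans htT⟩, intervalIntegral.integral_of_le hs.1, add_comm]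
  have hFt : IntegrableOn F (Ioc 0 t) := hF.mono_set (Ioc_subset_Ioc_right htT)
  by_cases hFy : IntegrableOn (fun τ => F τ * y τ) (Ioc 0 t)
  swap
  · -- `F * y` is not integrable on `(0, t]`: its integral is the junk value `0`, so `x t = C`.
    rw [hx t ⟨ht0, htT⟩, integral_undef hFy, zero_add]
    have : 0 ≤ ∫ τ in Ioc 0 t, F τ := setIntegral_nonneg measurableSet_Ioc fun τ _ => hFpos τ
    linarith
  have hyx' : ∀ᵐ τ ∂volume.restrict (Ioc 0 t), y τ ≤ √(C + ∫ σ in 0..τ, F σ * y σ) := by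
    filter_upwards [ae_restrict_of_ae_restrict_of_subset (Ioc_subset_Ioc_right htT) hyx,
      ae_restrict_mem measurableSet_Ioc] with τ hyτ hτ
    rwa [← hx' τ (Ioc_subset_Icc_self hτ)]
  have key := sqrt_add_integral_mul_le ht0 hC
    ((intervalIntegrable_iff_integrableOn_Ioc_of_le ht0).2 hFt)
    ((intervalIntegrable_iff_integrableOn_Ioc_of_le ht0).2 hFy) hFpos hypos hyx'
  rwa [← hx' t ⟨ht0, le_rfl⟩, intervalIntegral.integral_of_le ht0] at key

theorem stmt1 (T C : ℝ) (hT : 0 < T) (hC : 0 < C) (F y x : ℝ → ℝ)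
    (hF : IntegrableOn F (Set.Ioc 0 T))
    (hFpos : ∀ t, 0 ≤ F t) (hypos : ∀ t, 0 ≤ y t)
    (hymeas : Measurable y)
    (hx : ∀ t ∈ Set.Icc (0:ℝ) T, x t = (∫ τ in Set.Ioc 0 t, F τ * y τ) + C)
    (hyx : ∀ᵐ τ ∂(volume.restrict (Set.Ioc (0:ℝ) T)), y τ ≤ Real.sqrt (x τ)) :
    ∀ t ∈ Set.Icc (0:ℝ) T,
      Real.sqrt (x t) ≤ Real.sqrt C + (1 / 2) * ∫ τ in Set.Ioc 0 t, F τ :=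
  stmt1_general T C hC F y x hF hFpos hypos hx hyx
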